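/- Under κ-uniform convexity of the energy, there exists M ∈ ℕ, independent of the step size τ, such that for every iteration index k < N(τ) there exists an index k̂ ∈ [k, k+M] with t_{k̂+1} − t_{k̂} > 0; that is, after at most M iterations the local incremental minimization scheme performs a time step. -/

import Mathlib

open MeasureTheory
open scoped RealInnerProductSpace NNReal

noncomputable section

namespace RIS

variable {Z V X : Type*}
  [NormedAddCommGroup Z] [InnerProductSpace ℝ Z] [CompleteSpace Z]
  [NormedAddCommGroup V] [InnerProductSpace ℝ V] [CompleteSpace V]
  [NormedAddCommGroup X] [NormedSpace ℝ X]

/-- The convex subdifferential of `R : V → ℝ` at `u`, as a subset of the dual `V →L[ℝ] ℝ`. -/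
def subdiff (R : V → ℝ) (u : V) : Set (V →L[ℝ] ℝ) :=
  {ξ | ∀ v : V, R u + ξ (v - u) ≤ R v}

/-- The semilinear energy `I(t,z) = ½⟨Az,z⟩ + F(z) − ⟨ℓ(t), z⟩`. -/
def energy (A : Z →L[ℝ] Z →L[ℝ] ℝ) (F : Z → ℝ) (ℓ : ℝ → V →L[ℝ] ℝ)
    (ι : Z →L[ℝ] V) (t : ℝ) (z : Z) : ℝ :=
  (1 / 2 : ℝ) * A z z + F z - ℓ t (ι z)

/-- `D_z I(t,z) = Az + D_zF(z) − ℓ(t)`, as an element of `Z*` (here `D_zF(z)` and `ℓ(t)`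
are elements of `V*`, composed with the embedding `ι : Z ↪ V`). -/
def DI (A : Z →L[ℝ] Z →L[ℝ] ℝ) (DF : Z → V →L[ℝ] ℝ) (ℓ : ℝ → V →L[ℝ] ℝ)
    (ι : Z →L[ℝ] V) (t : ℝ) (z : Z) : Z →L[ℝ] ℝ :=
  A z + (DF z).comp ι - (ℓ t).comp ι

/-- Local stability: `0 ∈ ∂R(0) + D_z I(t,z)`. -/
def LocStable (R : V → ℝ) (A : Z →L[ℝ] Z →L[ℝ] ℝ) (DF : Z → V →L[ℝ] ℝ)
    (ℓ : ℝ → V →L[ℝ] ℝ) (ι : Z →L[ℝ] V) (t : ℝ) (z : Z) : Prop :=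
  ∃ ξ ∈ subdiff R 0, ξ.comp ι + DI A DF ℓ ι t z = 0

/-- The local incremental minimization scheme with step size `τ`:
`z_{k+1}` minimizes `I(t_k, ·) + R(· − z_k)` over the ball `‖· − z_k‖_V ≤ τ`
and `t_{k+1} = min{t_k + τ − ‖z_{k+1} − z_k‖_V, T}`, starting from `t_0 = 0`, `z_0 = z₀`. -/
def Scheme (A : Z →L[ℝ] Z →L[ℝ] ℝ) (F : Z → ℝ) (R : V → ℝ) (ℓ : ℝ → V →L[ℝ] ℝ)
    (ι : Z →L[ℝ] V) (T τ : ℝ) (z₀ : Z) (t : ℕ → ℝ) (z : ℕ → Z) : Prop :=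
  t 0 = 0 ∧ z 0 = z₀ ∧
    ∀ k : ℕ,
      ‖ι (z (k + 1) - z k)‖ ≤ τ ∧
      (∀ w : Z, ‖ι (w - z k)‖ ≤ τ →
        energy A F ℓ ι (t k) (z (k + 1)) + R (ι (z (k + 1) - z k)) ≤
          energy A F ℓ ι (t k) w + R (ι (w - z k))) ∧
      t (k + 1) = min (t k + τ - ‖ι (z (k + 1) - z k)‖) T

/-- Standing assumptions on the data of the rate-independent system. -/
def StandingAssumptions (ι : Z →L[ℝ] V) (ιX : V →L[ℝ] X)
    (A : Z →L[ℝ] Z →L[ℝ] ℝ) (α : ℝ) (F : Z → ℝ) (DF : Z → V →L[ℝ] ℝ)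
    (D2F : Z → Z →L[ℝ] V →L[ℝ] ℝ) (R : V → ℝ) (ℓ : ℝ → V →L[ℝ] ℝ)
    (L T : ℝ) : Prop :=
  Function.Injective (ι : Z → V) ∧ DenseRange (ι : Z → V) ∧ (∀ w : Z, ‖ι w‖ ≤ ‖w‖) ∧
  Function.Injective (ιX : V → X) ∧
  (∀ z w : Z, A z w = A w z) ∧ 0 < α ∧ (∀ w : Z, α * ‖w‖ ^ 2 ≤ A w w) ∧
  (∀ w : Z, 0 ≤ F w) ∧
  (∀ w : Z, HasFDerivAt F ((DF w).comp ι) w) ∧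
  (∀ w : Z, HasFDerivAt DF (D2F w) w) ∧
  (∃ CF q : ℝ, 0 < CF ∧ 1 ≤ q ∧ ∀ w v : Z, ‖D2F w v‖ ≤ CF * (1 + ‖w‖ ^ q) * ‖v‖) ∧
  0 ≤ L ∧ LipschitzOnWith (Real.toNNReal L) ℓ (Set.Icc 0 T) ∧ 0 < T ∧
  ConvexOn ℝ Set.univ R ∧ LowerSemicontinuous R ∧ (∀ v : V, 0 ≤ R v) ∧
  (∀ (c : ℝ) (v : V), 0 ≤ c → R (c • v) = c * R v) ∧
  (∃ ρ₁ ρ₂ : ℝ, 0 < ρ₁ ∧ 0 < ρ₂ ∧ ∀ v : V, ρ₁ * ‖ιX v‖ ≤ R v ∧ R v ≤ ρ₂ * ‖v‖)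

/-- `κ`-uniform convexity of the energy: `⟨D²_zI(t,z)v,v⟩ ≥ κ‖v‖²_Z`, where
`D²_zI(t,z)[v,v] = ⟨Av,v⟩ + ⟨D²F(z)v, v⟩`. -/
def UniformlyConvex (A : Z →L[ℝ] Z →L[ℝ] ℝ) (D2F : Z → Z →L[ℝ] V →L[ℝ] ℝ)
    (ι : Z →L[ℝ] V) (κ : ℝ) : Prop :=
  0 < κ ∧ ∀ w v : Z, κ * ‖v‖ ^ 2 ≤ A v v + D2F w v (ι v)

/-- A differential solution of the rate-independent system: `y ∈ W^{1,1}(0,T;Z)`,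
`y(0) = z₀` and `0 ∈ ∂R(y'(t)) + D_zI(t, y(t))` for a.e. `t ∈ (0,T)`. -/
def IsDiffSol (A : Z →L[ℝ] Z →L[ℝ] ℝ) (DF : Z → V →L[ℝ] ℝ) (ℓ : ℝ → V →L[ℝ] ℝ)
    (R : V → ℝ) (ι : Z →L[ℝ] V) (T : ℝ) (z₀ : Z) (y : ℝ → Z) : Prop :=
  y 0 = z₀ ∧
  ∃ y' : ℝ → Z,
    IntervalIntegrable y' volume 0 T ∧
    (∀ s ∈ Set.Icc (0 : ℝ) T, y s = z₀ + ∫ r in (0 : ℝ)..s, y' r) ∧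
    (∀ᵐ s ∂(volume.restrict (Set.Ioo (0 : ℝ) T)),
      ∃ ξ ∈ subdiff R (ι (y' s)), ξ.comp ι + DI A DF ℓ ι s (y s) = 0)



lemma taylor_one {f f' f'' : ℝ → ℝ} {c : ℝ}
    (hf : ∀ x, HasDerivAt f (f' x) x) (hf' : ∀ x, HasDerivAt f' (f'' x) x)
    (hc : ∀ x, c ≤ f'' x) :
    f 0 + f' 0 + c / 2 ≤ f 1 := by
  set g : ℝ → ℝ := fun x => f x - c * x ^ 2 / 2 with hg
  have hg' : ∀ x, HasDerivAt g (f' x - c * x) x := by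
    intro x
    have h2 : HasDerivAt (fun x : ℝ => c * x ^ 2 / 2) (c * x) x := by
      have h3 := ((hasDerivAt_pow 2 x).const_mul c).div_const 2
      refine h3.congr_deriv ?_
      simp; ring
    exact (hf x).sub h2
  have hd2 : ∀ x, HasDerivAt (fun x => f' x - c * x) (f'' x - c) x := by
    intro x
    exact ((hf' x).sub ((hasDerivAt_id x).const_mul c)).congr_deriv (by simp)
  have hmono : Monotone (fun x => f' x - c * x) := by
    apply monotone_of_deriv_nonneg
    · exact fun x => (hd2 x).differentiableAt
    · intro x
      rw [(hd2 x).deriv]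
      linarith [hc x]
  obtain ⟨ξ, hξ, hslope⟩ := exists_hasDerivAt_eq_slope g (fun x => f' x - c * x) one_pos
    (fun x _ => ((hg' x).continuousAt).continuousWithinAt)
    (fun x _ => hg' x)
  have h1 : g 1 - g 0 = f' ξ - c * ξ := by
    have h4 : (g 1 - g 0) / (1 - 0) = f' ξ - c * ξ := hslope.symm
    simpa using h4
  have h2 : f' 0 - c * 0 ≤ f' ξ - c * ξ := hmono (le_of_lt hξ.1)
  simp only [hg] at h1
  nlinarith

lemma energy_taylor (ι : Z →L[ℝ] V) (A : Z →L[ℝ] Z →L[ℝ] ℝ) (F : Z → ℝ)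
    (DF : Z → V →L[ℝ] ℝ) (D2F : Z → Z →L[ℝ] V →L[ℝ] ℝ) (ℓ : ℝ → V →L[ℝ] ℝ) {κ : ℝ}
    (hsym : ∀ z w : Z, A z w = A w z)
    (hDF : ∀ w : Z, HasFDerivAt F ((DF w).comp ι) w)
    (hD2F : ∀ w : Z, HasFDerivAt DF (D2F w) w)
    (hκ : ∀ w v : Z, κ * ‖v‖ ^ 2 ≤ A v v + D2F w v (ι v))
    (s : ℝ) (z d : Z) :
    energy A F ℓ ι s z + DI A DF ℓ ι s z d + κ * ‖d‖ ^ 2 / 2 ≤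
      energy A F ℓ ι s (z + d) := by
  set f : ℝ → ℝ := fun θ => energy A F ℓ ι s (z + θ • d) with hfdef
  set f' : ℝ → ℝ := fun θ => DI A DF ℓ ι s (z + θ • d) d with hf'def
  set f'' : ℝ → ℝ := fun θ => A d d + D2F (z + θ • d) d (ι d) with hf''def
  have hline : ∀ θ : ℝ, HasDerivAt (fun θ : ℝ => z + θ • d) d θ := by
    intro θ
    simpa using ((hasDerivAt_id θ).smul_const d).const_add z
  have hF : ∀ θ : ℝ, HasDerivAt (fun θ : ℝ => F (z + θ • d)) (DF (z + θ • d) (ι d)) θ := by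
    intro θ
    have := (hDF (z + θ • d)).comp_hasDerivAt θ (hline θ)
    exact this
  have hDFd : ∀ θ : ℝ, HasDerivAt (fun θ : ℝ => DF (z + θ • d) (ι d))
      (D2F (z + θ • d) d (ι d)) θ := by
    intro θ
    have h1 : HasDerivAt (fun θ : ℝ => DF (z + θ • d)) (D2F (z + θ • d) d) θ := by
      have := (hD2F (z + θ • d)).comp_hasDerivAt θ (hline θ)
      exact this
    have := h1.clm_apply (hasDerivAt_const θ (ι d))
    simpa using this
  have hqexp : ∀ θ : ℝ, A (z + θ • d) (z + θ • d)
      = A z z + θ * (2 * A z d) + θ ^ 2 * A d d := by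
    intro θ
    simp only [map_add, _root_.map_smul, ContinuousLinearMap.add_apply,
      ContinuousLinearMap.smul_apply, smul_eq_mul, hsym d z]
    ring
  have hfeq : ∀ θ : ℝ, f θ = (1/2 : ℝ) * A z z + θ * A z d + θ ^ 2 * (A d d / 2)
      + F (z + θ • d) - (ℓ s (ι z) + θ * ℓ s (ι d)) := by
    intro θ
    simp only [hfdef, energy, hqexp θ, map_add, _root_.map_smul,
      ContinuousLinearMap.add_apply, ContinuousLinearMap.smul_apply, smul_eq_mul, hsym d z]
    ring
  have hf'eq : ∀ θ : ℝ, f' θ = A z d + θ * A d d + DF (z + θ • d) (ι d) - ℓ s (ι d) := by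
    intro θ
    simp only [hf'def, DI, ContinuousLinearMap.sub_apply, ContinuousLinearMap.add_apply,
      ContinuousLinearMap.comp_apply, map_add, _root_.map_smul,
      ContinuousLinearMap.smul_apply, smul_eq_mul]
    try ring
  have hder1 : ∀ θ : ℝ, HasDerivAt f (f' θ) θ := by
    intro θ
    rw [hf'eq θ]
    have hpoly : HasDerivAt (fun θ : ℝ => (1/2 : ℝ) * A z z + θ * A z d + θ ^ 2 * (A d d / 2))
        (A z d + θ * A d d) θ := by
      have h2 := (((hasDerivAt_id θ).mul_const (A z d)).const_add ((1/2 : ℝ) * A z z)).add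
        ((hasDerivAt_pow 2 θ).mul_const (A d d / 2))
      refine h2.congr_deriv ?_
      simp
      try ring
    have hlin : HasDerivAt (fun θ : ℝ => ℓ s (ι z) + θ * ℓ s (ι d)) (ℓ s (ι d)) θ := by
      simpa using ((hasDerivAt_id θ).mul_const (ℓ s (ι d))).const_add (ℓ s (ι z))
    have h1 := (hpoly.add (hF θ)).sub hlin
    exact h1.congr_of_eventuallyEq (Filter.Eventually.of_forall fun x => hfeq x)
  have hder2 : ∀ θ : ℝ, HasDerivAt f' (f'' θ) θ := by
    intro θ
    have hpoly : HasDerivAt (fun θ : ℝ => A z d + θ * A d d) (A d d) θ := by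
      simpa using ((hasDerivAt_id θ).mul_const (A d d)).const_add (A z d)
    have h1 := (hpoly.add (hDFd θ)).sub (hasDerivAt_const θ (ℓ s (ι d)))
    have h2 : HasDerivAt (fun θ : ℝ => A z d + θ * A d d + DF (z + θ • d) (ι d) - ℓ s (ι d))
        (f'' θ) θ := by
      refine h1.congr_deriv ?_
      simp [hf''def]
      try ring
    exact h2.congr_of_eventuallyEq (Filter.Eventually.of_forall fun x => hf'eq x)
  have hcc : ∀ θ : ℝ, κ * ‖d‖ ^ 2 ≤ f'' θ := fun θ => hκ _ d
  have := taylor_one hder1 hder2 hcc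
  have hf0 : f 0 = energy A F ℓ ι s z := by simp [hfdef]
  have hf1 : f 1 = energy A F ℓ ι s (z + d) := by simp [hfdef]
  have hf'0 : f' 0 = DI A DF ℓ ι s z d := by simp [hf'def]
  rw [hf0, hf1, hf'0] at this
  linarith

section Aux

variable (ι : Z →L[ℝ] V) (A : Z →L[ℝ] Z →L[ℝ] ℝ) (F : Z → ℝ)
    (DF : Z → V →L[ℝ] ℝ) (D2F : Z → Z →L[ℝ] V →L[ℝ] ℝ) (ℓ : ℝ → V →L[ℝ] ℝ)
    (R : V → ℝ) {κ : ℝ}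

lemma R_zero (hhom : ∀ (c : ℝ) (v : V), 0 ≤ c → R (c • v) = c * R v) : R 0 = 0 := by
  have := hhom 0 0 le_rfl
  simpa using this

lemma R_subadd (hconv : ConvexOn ℝ Set.univ R)
    (hhom : ∀ (c : ℝ) (v : V), 0 ≤ c → R (c • v) = c * R v) (x y : V) :
    R (x + y) ≤ R x + R y := by
  have h1 := hconv.2 (Set.mem_univ x) (Set.mem_univ y)
    (by norm_num : (0:ℝ) ≤ 1/2) (by norm_num : (0:ℝ) ≤ 1/2) (by norm_num)
  simp only [smul_eq_mul] at h1
  have h2 : x + y = (2:ℝ) • ((1/2:ℝ) • x + (1/2:ℝ) • y) := by module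
  rw [h2, hhom 2 _ (by norm_num)]
  linarith

variable (hsym : ∀ z w : Z, A z w = A w z)
    (hDF : ∀ w : Z, HasFDerivAt F ((DF w).comp ι) w)
    (hD2F : ∀ w : Z, HasFDerivAt DF (D2F w) w)
    (hκ : ∀ w v : Z, κ * ‖v‖ ^ 2 ≤ A v v + D2F w v (ι v))

include hsym hDF hD2F hκ

lemma energy_midpoint (s : ℝ) (u v : Z) :
    2 * energy A F ℓ ι s (u + (1/2 : ℝ) • (v - u)) + κ * ‖v - u‖ ^ 2 / 4 ≤
      energy A F ℓ ι s u + energy A F ℓ ι s v := by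
  set m := u + (1/2 : ℝ) • (v - u) with hm
  have h1 := energy_taylor ι A F DF D2F ℓ hsym hDF hD2F hκ s m ((1/2 : ℝ) • (v - u))
  have h2 := energy_taylor ι A F DF D2F ℓ hsym hDF hD2F hκ s m (-((1/2 : ℝ) • (v - u)))
  have e1 : m + (1/2 : ℝ) • (v - u) = v := by rw [hm]; module
  have e2 : m + -((1/2 : ℝ) • (v - u)) = u := by rw [hm]; module
  rw [e1] at h1
  rw [e2] at h2
  have e3 : DI A DF ℓ ι s m (-((1/2 : ℝ) • (v - u))) = -(DI A DF ℓ ι s m ((1/2 : ℝ) • (v - u))) :=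
    map_neg _ _
  have e4 : ‖(1/2 : ℝ) • (v - u)‖ ^ 2 = ‖v - u‖ ^ 2 / 4 := by
    rw [norm_smul]
    simp [norm_div]
    ring
  have e5 : ‖-((1/2 : ℝ) • (v - u))‖ ^ 2 = ‖v - u‖ ^ 2 / 4 := by rw [norm_neg]; exact e4
  rw [e4] at h1
  rw [e3, e5] at h2
  linarith

/-- Strong minimality: if `z*` beats the midpoint towards `w`, it beats `w` with a
quadratic margin. -/
lemma min_strong (hconv : ConvexOn ℝ Set.univ R) (s : ℝ) (base zs w : Z)
    (hmid : energy A F ℓ ι s zs + R (ι (zs - base)) ≤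
      energy A F ℓ ι s (zs + (1/2 : ℝ) • (w - zs)) +
        R (ι (zs + (1/2 : ℝ) • (w - zs) - base))) :
    energy A F ℓ ι s zs + R (ι (zs - base)) + κ / 4 * ‖w - zs‖ ^ 2 ≤
      energy A F ℓ ι s w + R (ι (w - base)) := by
  set m := zs + (1/2 : ℝ) • (w - zs) with hm
  have h1 := energy_midpoint ι A F DF D2F ℓ hsym hDF hD2F hκ s zs w
  have e1 : ι (m - base) = (1/2 : ℝ) • ι (zs - base) + (1/2 : ℝ) • ι (w - base) := by
    have : m - base = (1/2 : ℝ) • (zs - base) + (1/2 : ℝ) • (w - base) := by rw [hm]; module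
    rw [this, map_add, _root_.map_smul, _root_.map_smul]
  have h2 : R (ι (m - base)) ≤ (1/2 : ℝ) * R (ι (zs - base)) + (1/2 : ℝ) * R (ι (w - base)) := by
    rw [e1]
    have := hconv.2 (Set.mem_univ (ι (zs - base))) (Set.mem_univ (ι (w - base)))
      (by norm_num : (0:ℝ) ≤ 1/2) (by norm_num : (0:ℝ) ≤ 1/2) (by norm_num)
    simpa using this
  rw [← hm] at h1
  linarith

/-- Convexity of the energy along segments. -/
lemma energy_convex (hκpos : 0 < κ) (s : ℝ) (a b : Z) {θ : ℝ} (h0 : 0 ≤ θ) (h1 : θ ≤ 1) :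
    energy A F ℓ ι s (a + θ • (b - a)) ≤
      (1 - θ) * energy A F ℓ ι s a + θ * energy A F ℓ ι s b := by
  set x := a + θ • (b - a) with hx
  have ht1 := energy_taylor ι A F DF D2F ℓ hsym hDF hD2F hκ s x (a - x)
  have ht2 := energy_taylor ι A F DF D2F ℓ hsym hDF hD2F hκ s x (b - x)
  have e1 : x + (a - x) = a := by abel
  have e2 : x + (b - x) = b := by abel
  rw [e1] at ht1
  rw [e2] at ht2
  have ha : energy A F ℓ ι s x + DI A DF ℓ ι s x (a - x) ≤ energy A F ℓ ι s a := by
    nlinarith [sq_nonneg ‖a - x‖, hκpos]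
  have hb : energy A F ℓ ι s x + DI A DF ℓ ι s x (b - x) ≤ energy A F ℓ ι s b := by
    nlinarith [sq_nonneg ‖b - x‖, hκpos]
  have hzero : (1 - θ) * DI A DF ℓ ι s x (a - x) + θ * DI A DF ℓ ι s x (b - x) = 0 := by
    have hcomb : (1 - θ) • (a - x) + θ • (b - x) = (0 : Z) := by rw [hx]; module
    have : (1 - θ) * DI A DF ℓ ι s x (a - x) + θ * DI A DF ℓ ι s x (b - x)
        = DI A DF ℓ ι s x ((1 - θ) • (a - x) + θ • (b - x)) := by
      rw [map_add, _root_.map_smul, _root_.map_smul]; simp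
    rw [this, hcomb, map_zero]
  have ha' := mul_le_mul_of_nonneg_left ha (by linarith : (0:ℝ) ≤ 1 - θ)
  have hb' := mul_le_mul_of_nonneg_left hb h0
  nlinarith [ha', hb']

/-- A constrained minimizer with inactive constraint is a global minimizer. -/
lemma global_min (hκpos : 0 < κ) (hconv : ConvexOn ℝ Set.univ R) {τ : ℝ}
    (s : ℝ) (base zs : Z)
    (hmin : ∀ w : Z, ‖ι (w - base)‖ ≤ τ →
      energy A F ℓ ι s zs + R (ι (zs - base)) ≤ energy A F ℓ ι s w + R (ι (w - base)))
    (hδ : ‖ι (zs - base)‖ < τ) (w : Z) :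
    energy A F ℓ ι s zs + R (ι (zs - base)) ≤ energy A F ℓ ι s w + R (ι (w - base)) := by
  set δ := ‖ι (zs - base)‖ with hδdef
  set B := ‖ι (w - base)‖ with hB
  set D := τ - δ with hD
  have hDpos : 0 < D := by rw [hD]; linarith
  have hBnn : 0 ≤ B := norm_nonneg _
  have hden : 0 < D + B + 1 := by linarith
  set θ := D / (D + B + 1) with hθ
  have hθpos : 0 < θ := div_pos hDpos hden
  have hθ1 : θ ≤ 1 := by
    rw [hθ, div_le_one hden]; linarith
  set x := zs + θ • (w - zs) with hx
  have hxball : ‖ι (x - base)‖ ≤ τ := by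
    have e1 : ι (x - base) = (1 - θ) • ι (zs - base) + θ • ι (w - base) := by
      have : x - base = (1 - θ) • (zs - base) + θ • (w - base) := by rw [hx]; module
      rw [this, map_add, _root_.map_smul, _root_.map_smul]
    rw [e1]
    have h2 : ‖(1 - θ) • ι (zs - base) + θ • ι (w - base)‖ ≤ (1 - θ) * δ + θ * B := by
      refine le_trans (norm_add_le _ _) ?_
      rw [norm_smul, norm_smul, Real.norm_eq_abs, Real.norm_eq_abs,
        abs_of_nonneg (by linarith : (0:ℝ) ≤ 1 - θ), abs_of_nonneg hθpos.le]
    have h3 : θ * (B + 1) ≤ D := by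
      rw [hθ, div_mul_eq_mul_div, div_le_iff₀ hden]
      nlinarith
    have hδnn : 0 ≤ δ := norm_nonneg _
    nlinarith
  have hGx := hmin x hxball
  have hE := energy_convex ι A F DF D2F ℓ hsym hDF hD2F hκ hκpos s zs w hθpos.le hθ1
  have hR : R (ι (x - base)) ≤ (1 - θ) * R (ι (zs - base)) + θ * R (ι (w - base)) := by
    have e1 : ι (x - base) = (1 - θ) • ι (zs - base) + θ • ι (w - base) := by
      have : x - base = (1 - θ) • (zs - base) + θ • (w - base) := by rw [hx]; module
      rw [this, map_add, _root_.map_smul, _root_.map_smul]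
    rw [e1]
    have := hconv.2 (Set.mem_univ (ι (zs - base))) (Set.mem_univ (ι (w - base)))
      (by linarith : (0:ℝ) ≤ 1 - θ) hθpos.le (by ring)
    simpa using this
  rw [← hx] at hE
  have hkey : energy A F ℓ ι s zs + R (ι (zs - base)) ≤
      (1 - θ) * (energy A F ℓ ι s zs + R (ι (zs - base)))
        + θ * (energy A F ℓ ι s w + R (ι (w - base))) := by
    calc energy A F ℓ ι s zs + R (ι (zs - base)) ≤
        energy A F ℓ ι s x + R (ι (x - base)) := hGx
      _ ≤ (1 - θ) * (energy A F ℓ ι s zs + R (ι (zs - base)))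
          + θ * (energy A F ℓ ι s w + R (ι (w - base))) := by linarith
  nlinarith [hkey, hθpos]

end Aux

section Chain

variable (ι : Z →L[ℝ] V) (A : Z →L[ℝ] Z →L[ℝ] ℝ) (F : Z → ℝ)
    (DF : Z → V →L[ℝ] ℝ) (D2F : Z → Z →L[ℝ] V →L[ℝ] ℝ) (ℓ : ℝ → V →L[ℝ] ℝ)
    (R : V → ℝ) {κ : ℝ}
    (hsym : ∀ z w : Z, A z w = A w z)
    (hDF : ∀ w : Z, HasFDerivAt F ((DF w).comp ι) w)
    (hD2F : ∀ w : Z, HasFDerivAt DF (D2F w) w)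
    (hκ : ∀ w v : Z, κ * ‖v‖ ^ 2 ≤ A v v + D2F w v (ι v))

include hsym hDF hD2F hκ

/-- During a chain of stuck steps the energy drops by at least `κτ²/4` per step. -/
lemma chain_drop (hκpos : 0 < κ) (hconv : ConvexOn ℝ Set.univ R)
    (hhom : ∀ (c : ℝ) (v : V), 0 ≤ c → R (c • v) = c * R v)
    (hι : ∀ w : Z, ‖ι w‖ ≤ ‖w‖)
    {τ : ℝ} (hτ : 0 < τ) (s : ℝ) (z : ℕ → Z) (k₀ : ℕ) :
    ∀ m : ℕ, (∀ j : ℕ, k₀ ≤ j → j < k₀ + m → (‖ι (z (j + 1) - z j)‖ = τ ∧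
      ∀ w : Z, ‖ι (w - z j)‖ ≤ τ →
        energy A F ℓ ι s (z (j + 1)) + R (ι (z (j + 1) - z j)) ≤
          energy A F ℓ ι s w + R (ι (w - z j)))) →
      energy A F ℓ ι s (z (k₀ + m)) + R (ι (z (k₀ + m) - z k₀))
        + m * (κ * τ ^ 2 / 4) ≤ energy A F ℓ ι s (z k₀) := by
  intro m
  induction m with
  | zero =>
      intro _
      simp [R_zero R hhom]
  | succ m ih =>
      intro hstuck
      have ihh := ih (fun j hj1 hj2 => hstuck j hj1 (by omega))
      set j := k₀ + m with hj
      obtain ⟨hδ, hmin⟩ := hstuck j (Nat.le_add_right _ _) (by omega)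
      -- strong minimality of z (j+1) against w = z j
      have hmid : energy A F ℓ ι s (z (j + 1)) + R (ι (z (j + 1) - z j)) ≤
          energy A F ℓ ι s (z (j + 1) + (1/2 : ℝ) • (z j - z (j + 1))) +
            R (ι (z (j + 1) + (1/2 : ℝ) • (z j - z (j + 1)) - z j)) := by
        apply hmin
        have e1 : z (j + 1) + (1/2 : ℝ) • (z j - z (j + 1)) - z j
            = (1/2 : ℝ) • (z (j + 1) - z j) := by module
        rw [e1, _root_.map_smul, norm_smul, Real.norm_eq_abs]
        rw [hδ]
        rw [abs_of_nonneg (by norm_num : (0:ℝ) ≤ 1/2)]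
        linarith
      have hstrong := min_strong ι A F DF D2F ℓ R hsym hDF hD2F hκ hconv s (z j)
        (z (j + 1)) (z j) hmid
      have hz0 : ι (z j - z j) = 0 := by simp
      rw [hz0, R_zero R hhom] at hstrong
      have hnorm : τ ≤ ‖z j - z (j + 1)‖ := by
        have h1 : ‖ι (z j - z (j + 1))‖ ≤ ‖z j - z (j + 1)‖ := hι _
        have h2 : ‖ι (z j - z (j + 1))‖ = τ := by
          rw [show z j - z (j + 1) = -(z (j + 1) - z j) by abel, map_neg, norm_neg, hδ]
        linarith
      have hsq : κ / 4 * τ ^ 2 ≤ κ / 4 * ‖z j - z (j + 1)‖ ^ 2 := by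
        have := pow_le_pow_left₀ hτ.le hnorm 2
        nlinarith
      have hstep : energy A F ℓ ι s (z (j + 1)) + R (ι (z (j + 1) - z j))
          + κ * τ ^ 2 / 4 ≤ energy A F ℓ ι s (z j) := by linarith
      have hsub : R (ι (z (j + 1) - z k₀)) ≤
          R (ι (z (j + 1) - z j)) + R (ι (z j - z k₀)) := by
        have e1 : ι (z (j + 1) - z k₀) = ι (z (j + 1) - z j) + ι (z j - z k₀) := by
          rw [← map_add]
          congr 1
          abel
        rw [e1]
        exact R_subadd R hconv hhom _ _
      push_cast
      have : energy A F ℓ ι s (z (k₀ + (m+1))) + R (ι (z (k₀ + (m+1)) - z k₀))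
          + (m + 1 : ℝ) * (κ * τ ^ 2 / 4) ≤ energy A F ℓ ι s (z k₀) := by
        have hjj : k₀ + (m + 1) = j + 1 := by omega
        rw [hjj]
        linarith
      exact this

end Chain
/-- Lemma 3.12: under `κ`-uniform convexity there exists `M ∈ ℕ`,
independent of the step size `τ`, such that for every iteration index `k < N(τ)`
there is an index `k̂ ∈ [k, k+M]` with `t_{k̂+1} − t_{k̂} > 0`, i.e. after at most
`M` iterations the local incremental minimization scheme performs a time step. -/
theorem statement9
    (ι : Z →L[ℝ] V) (ιX : V →L[ℝ] X)
    (A : Z →L[ℝ] Z →L[ℝ] ℝ) (α : ℝ) (F : Z → ℝ) (DF : Z → V →L[ℝ] ℝ)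
    (D2F : Z → Z →L[ℝ] V →L[ℝ] ℝ) (R : V → ℝ) (ℓ : ℝ → V →L[ℝ] ℝ) (L T : ℝ)
    (hstand : StandingAssumptions ι ιX A α F DF D2F R ℓ L T)
    (κ : ℝ) (hconv : UniformlyConvex A D2F ι κ)
    (z₀ : Z) (hz₀ : LocStable R A DF ℓ ι 0 z₀)
    (t : ℝ → ℕ → ℝ) (z : ℝ → ℕ → Z)
    (hscheme : ∀ τ : ℝ, 0 < τ → Scheme A F R ℓ ι T τ z₀ (t τ) (z τ))
    (N : ℝ → ℕ)
    (hN : ∀ τ : ℝ, 0 < τ → t τ (N τ) = T ∧ ∀ j : ℕ, j < N τ → t τ j < T) :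
    ∃ M : ℕ, ∀ τ : ℝ, 0 < τ → ∀ k : ℕ, k < N τ →
      ∃ khat : ℕ, k ≤ khat ∧ khat ≤ k + M ∧ 0 < t τ (khat + 1) - t τ khat := by
  obtain ⟨hinj, hdense, hι, hinjX, hsymA, hα, hcoer, hFnn, hDFd, hD2Fd, hCF, hL, hlip,
    hT, hconvR, hlsc, hRnn, hhom, hρ⟩ := hstand
  obtain ⟨hκpos, hκ⟩ := hconv
  refine ⟨Nat.ceil (4 * L ^ 2 / κ ^ 2), ?_⟩
  set M := Nat.ceil (4 * L ^ 2 / κ ^ 2) with hMdef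
  intro τ hτ k hk
  by_contra hcon
  push_neg at hcon
  obtain ⟨ht0, hz0s, hstep⟩ := hscheme τ hτ
  -- basic facts about t
  have hTle : ∀ j, t τ j ≤ T := by
    intro j
    cases j with
    | zero => rw [ht0]; exact hT.le
    | succ j => rw [(hstep j).2.2]; exact min_le_right _ _
  have hmono1 : ∀ j, t τ j ≤ t τ (j + 1) := by
    intro j
    rw [(hstep j).2.2]
    refine le_min (by linarith [(hstep j).1]) (hTle j)
  have hmono : Monotone (t τ) := monotone_nat_of_le_succ hmono1
  have htnn : ∀ j, 0 ≤ t τ j := fun j => ht0 ▸ hmono (Nat.zero_le j)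
  have hklt : t τ k < T := (hN τ hτ).2 k hk
  -- t is constant on [k, k+M+1]
  have hconst : ∀ i : ℕ, i ≤ M + 1 → t τ (k + i) = t τ k := by
    intro i
    induction i with
    | zero => simp
    | succ i ih =>
        intro hi
        have h1 := ih (by omega)
        have h2 := hcon (k + i) (Nat.le_add_right _ _) (by omega)
        have h3 : t τ (k + i + 1) = t τ (k + i) := le_antisymm (by linarith) (hmono1 _)
        rw [show k + (i + 1) = (k + i) + 1 from rfl, h3, h1]
  -- least index with the same time value
  have hex : ∃ j, t τ j = t τ k := ⟨k, rfl⟩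
  set k₀ := Nat.find hex with hk₀def
  have hk₀spec : t τ k₀ = t τ k := Nat.find_spec hex
  have hk₀le : k₀ ≤ k := Nat.find_min' hex rfl
  have hconst2 : ∀ j, k₀ ≤ j → j ≤ k + M + 1 → t τ j = t τ k := by
    intro j hj1 hj2
    by_cases hjk : j ≤ k
    · exact le_antisymm (hmono hjk) (hk₀spec ▸ hmono hj1)
    · have : j = k + (j - k) := by omega
      rw [this]
      exact hconst (j - k) (by omega)
  -- each step in [k₀, k+M] is stuck with full step length τ
  have hstuck : ∀ j, k₀ ≤ j → j ≤ k + M → ‖ι (z τ (j + 1) - z τ j)‖ = τ := by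
    intro j hj1 hj2
    have e1 : t τ j = t τ k := hconst2 j hj1 (by omega)
    have e2 : t τ (j + 1) = t τ k := hconst2 (j + 1) (by omega) (by omega)
    have h3 := (hstep j).2.2
    rcases min_choice (t τ j + τ - ‖ι (z τ (j + 1) - z τ j)‖) T with hmc | hmc
    · rw [hmc] at h3
      rw [e1, e2] at h3
      linarith
    · rw [hmc] at h3
      rw [e2] at h3
      exact absurd h3 (by linarith)
  set s := t τ k with hsdef
  -- the key inequality: quantitative stability of z (k₀)
  have hstar : ∀ w : Z, energy A F ℓ ι s (z τ k₀) ≤ energy A F ℓ ι s w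
      + R (ι (w - z τ k₀)) + L * τ * ‖w - z τ k₀‖ - κ / 4 * ‖w - z τ k₀‖ ^ 2 := by
    intro w
    have hLτnn : 0 ≤ L * τ * ‖w - z τ k₀‖ := by positivity
    rcases Nat.eq_zero_or_pos k₀ with hk₀0 | hk₀pos
    · -- initial stability
      have hs0 : s = 0 := by
        rw [← hk₀spec, hk₀0, ht0]
      have hzz : z τ k₀ = z₀ := by rw [hk₀0, hz0s]
      obtain ⟨ξ, hξ, hξeq⟩ := hz₀
      have hξ0 : ∀ v, ξ v ≤ R v := by
        intro v
        have := hξ v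
        simpa [R_zero R hhom] using this
      have hDIeq : ∀ u : Z, DI A DF ℓ ι 0 z₀ u = -(ξ (ι u)) := by
        intro u
        have := congrArg (fun f : Z →L[ℝ] ℝ => f u) hξeq
        simp only [ContinuousLinearMap.add_apply, ContinuousLinearMap.comp_apply,
          ContinuousLinearMap.zero_apply] at this
        linarith
      have ht := energy_taylor ι A F DF D2F ℓ hsymA hDFd hD2Fd hκ 0 z₀ (w - z₀)
      have e1 : z₀ + (w - z₀) = w := by abel
      rw [e1, hDIeq] at ht
      have h2 : ξ (ι (w - z₀)) ≤ R (ι (w - z₀)) := hξ0 _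
      rw [hzz] at hLτnn
      rw [hs0, hzz]
      nlinarith [sq_nonneg ‖w - z₀‖, hκpos, mul_nonneg hκpos.le (sq_nonneg ‖w - z₀‖)]
    · -- z k₀ arose from a time-advancing step
      obtain ⟨j0, hj0⟩ : ∃ j0, k₀ = j0 + 1 := ⟨k₀ - 1, by omega⟩
      set r := t τ j0 with hrdef
      have hj0lt : j0 < k₀ := by omega
      have hne : t τ j0 ≠ t τ k := Nat.find_min hex hj0lt
      have hrle : r < s := lt_of_le_of_ne (hk₀spec ▸ hmono (by omega : j0 ≤ k₀)) hne
      have h3 := (hstep j0).2.2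
      rw [← hj0] at h3
      have hminle : t τ k₀ ≤ r + τ - ‖ι (z τ k₀ - z τ j0)‖ := by
        rw [h3, hj0]
        have := min_le_left (t τ j0 + τ - ‖ι (z τ (j0 + 1) - z τ j0)‖) T
        rw [← hj0] at this ⊢
        exact this
      have hsr : t τ k₀ = s := hk₀spec
      have hδlt : ‖ι (z τ k₀ - z τ j0)‖ < τ := by
        rw [hsr] at hminle
        linarith
      have hsrτ : s - r ≤ τ := by
        have hnn : 0 ≤ ‖ι (z τ k₀ - z τ j0)‖ := norm_nonneg _
        rw [hsr] at hminle
        linarith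
      -- global minimality at time r
      have hminr : ∀ w' : Z, ‖ι (w' - z τ j0)‖ ≤ τ →
          energy A F ℓ ι r (z τ k₀) + R (ι (z τ k₀ - z τ j0)) ≤
            energy A F ℓ ι r w' + R (ι (w' - z τ j0)) := by
        intro w' hw'
        have := (hstep j0).2.1 w' hw'
        rw [← hj0] at this
        exact this
      have hgm := global_min ι A F DF D2F ℓ R hsymA hDFd hD2Fd hκ hκpos hconvR r
        (z τ j0) (z τ k₀) hminr hδlt
      have hstr := min_strong ι A F DF D2F ℓ R hsymA hDFd hD2Fd hκ hconvR r (z τ j0)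
        (z τ k₀) w (hgm _)
      have hsub : R (ι (w - z τ j0)) ≤ R (ι (w - z τ k₀)) + R (ι (z τ k₀ - z τ j0)) := by
        have e1 : ι (w - z τ j0) = ι (w - z τ k₀) + ι (z τ k₀ - z τ j0) := by
          rw [← map_add]; congr 1; abel
        rw [e1]
        exact R_subadd R hconvR hhom _ _
      -- shift time from r to s
      have hlb : ℓ s (ι (w - z τ k₀)) - ℓ r (ι (w - z τ k₀)) ≤ L * τ * ‖w - z τ k₀‖ := by
        have hsmem : s ∈ Set.Icc (0:ℝ) T := ⟨htnn k, hTle k⟩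
        have hrmem : r ∈ Set.Icc (0:ℝ) T := ⟨htnn j0, hTle j0⟩
        have hd := hlip.dist_le_mul s hsmem r hrmem
        have hLc : ((Real.toNNReal L : ℝ≥0) : ℝ) = L := Real.coe_toNNReal L hL
        rw [dist_eq_norm, dist_eq_norm, hLc] at hd
        have hsrn : ‖s - r‖ = s - r := by
          rw [Real.norm_eq_abs, abs_of_nonneg (by linarith)]
        rw [hsrn] at hd
        have h5 : ℓ s (ι (w - z τ k₀)) - ℓ r (ι (w - z τ k₀))
            = (ℓ s - ℓ r) (ι (w - z τ k₀)) := by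
          simp [ContinuousLinearMap.sub_apply]
        rw [h5]
        calc (ℓ s - ℓ r) (ι (w - z τ k₀)) ≤ ‖(ℓ s - ℓ r) (ι (w - z τ k₀))‖ :=
              le_abs_self _
          _ ≤ ‖ℓ s - ℓ r‖ * ‖ι (w - z τ k₀)‖ := ContinuousLinearMap.le_opNorm _ _
          _ ≤ (L * (s - r)) * ‖w - z τ k₀‖ := by
              apply mul_le_mul hd (hι _) (norm_nonneg _)
              exact mul_nonneg hL (by linarith)
          _ ≤ L * τ * ‖w - z τ k₀‖ := by
              apply mul_le_mul_of_nonneg_right _ (norm_nonneg _)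
              apply mul_le_mul_of_nonneg_left _ hL
              linarith
      have hEshift : ∀ x : Z, energy A F ℓ ι s x = energy A F ℓ ι r x
          - (ℓ s (ι x) - ℓ r (ι x)) := by
        intro x
        simp only [energy]
        ring
      have e6 : ℓ s (ι (w - z τ k₀)) - ℓ r (ι (w - z τ k₀))
          = (ℓ s (ι w) - ℓ r (ι w)) - (ℓ s (ι (z τ k₀)) - ℓ r (ι (z τ k₀))) := by
        have e7 : ι (w - z τ k₀) = ι w - ι (z τ k₀) := by rw [map_sub]
        rw [e7, map_sub, map_sub]
        ring
      rw [hEshift (z τ k₀), hEshift w]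
      linarith
  -- the chain of stuck steps
  set m := k + M + 1 - k₀ with hmdef
  have hk₀m : k₀ + m = k + M + 1 := by omega
  have hchain := chain_drop ι A F DF D2F ℓ R hsymA hDFd hD2Fd hκ hκpos hconvR hhom hι
    hτ s (z τ) k₀ m (by
      intro j hj1 hj2
      have hj2' : j ≤ k + M := by omega
      refine ⟨hstuck j hj1 hj2', ?_⟩
      intro w hw
      have e1 : t τ j = s := hconst2 j hj1 (by omega)
      have := (hstep j).2.1 w hw
      rw [e1] at this
      exact this)
  rw [hk₀m] at hchain
  have hstar_at := hstar (z τ (k + M + 1))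
  set D := ‖z τ (k + M + 1) - z τ k₀‖ with hDdef
  have hDnn : 0 ≤ D := norm_nonneg _
  have hmain : (m : ℝ) * (κ * τ ^ 2 / 4) ≤ L * τ * D - κ / 4 * D ^ 2 := by linarith
  have hquad : L * τ * D - κ / 4 * D ^ 2 ≤ L ^ 2 * τ ^ 2 / κ := by
    have h12 : L ^ 2 * τ ^ 2 / κ - (L * τ * D - κ / 4 * D ^ 2)
        = (κ * D - 2 * L * τ) ^ 2 / (4 * κ) := by
      field_simp
      ring
    have h13 : (0:ℝ) ≤ (κ * D - 2 * L * τ) ^ 2 / (4 * κ) := by positivity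
    linarith
  have hmge : (M : ℝ) + 1 ≤ (m : ℝ) := by
    have : M + 1 ≤ m := by omega
    exact_mod_cast this
  have hMge : 4 * L ^ 2 / κ ^ 2 ≤ (M : ℝ) := Nat.le_ceil _
  have hpos4 : (0:ℝ) < κ * τ ^ 2 / 4 := by positivity
  have h6 : ((M : ℝ) + 1) * (κ * τ ^ 2 / 4) ≤ (m : ℝ) * (κ * τ ^ 2 / 4) :=
    mul_le_mul_of_nonneg_right hmge hpos4.le
  have h9 : (4 * L ^ 2 / κ ^ 2) * (κ * τ ^ 2 / 4) ≤ (M : ℝ) * (κ * τ ^ 2 / 4) :=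
    mul_le_mul_of_nonneg_right hMge hpos4.le
  have e8 : (4 * L ^ 2 / κ ^ 2) * (κ * τ ^ 2 / 4) = L ^ 2 * τ ^ 2 / κ := by
    field_simp
  linarith

end RIS
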